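/- If F : L_n → ΔK is a non-degenerate 2-filtration and a,d,e,h are as in the two-square setup with adeh defined as the 1-dimensional Möbius inversion along a path through a ≤ d ≤ e ≤ h, then adeh ∈ {0, 1, 2}. -/

import Mathlib

noncomputable section
open scoped Classical

variable {V : Type*} [DecidableEq V] [Fintype V]

/-- A finite abstract simplicial complex on vertex set `V`:
a collection of nonempty finite sets closed under taking nonempty subsets. -/
def IsComplex (K : Finset (Finset V)) : Prop :=
  ∀ s ∈ K, s ≠ ∅ ∧ ∀ t : Finset V, t ⊆ s → t ≠ ∅ → t ∈ K

/-- The space of simplicial chains (all dimensions together) with `ZMod 2` coefficients. -/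
abbrev Chn (V : Type*) := Finset V →₀ ZMod 2

/-- The simplicial boundary operator (mod 2). -/
def bdry (V : Type*) [DecidableEq V] : Chn V →ₗ[ZMod 2] Chn V :=
  Finsupp.lsum (ZMod 2) fun s =>
    LinearMap.toSpanSingleton (ZMod 2) (Chn V) (∑ v ∈ s, Finsupp.single (s.erase v) 1)

/-- The subspace of `d`-chains supported on a complex `L`. -/
def chainsOf (d : ℕ) (L : Finset (Finset V)) : Submodule (ZMod 2) (Chn V) :=
  Submodule.span (ZMod 2)
    ((fun s => Finsupp.single s (1 : ZMod 2)) '' {s : Finset V | s ∈ L ∧ s.card = d + 1})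

/-- The subspace `Z_d L` of `d`-cycles of the complex `L`. -/
def cyclesOf (d : ℕ) (L : Finset (Finset V)) : Submodule (ZMod 2) (Chn V) :=
  chainsOf d L ⊓ LinearMap.ker (bdry V)

/-- The subspace `B_d L` of `d`-boundaries of the complex `L`. -/
def boundariesOf (d : ℕ) (L : Finset (Finset V)) : Submodule (ZMod 2) (Chn V) :=
  Submodule.map (bdry V) (chainsOf (d+1) L)

/-- The birth–death function of a 1-filtration indexed by `Fin (n+1)`:
`ZB_d F [a,b] = dim (Z_d F(a) ⊓ B_d F(b))` for `b ≠ ⊤`, and `dim Z_d F(a)` for `b = ⊤`. -/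
def ZBFin (d n : ℕ) (F : Fin (n+1) → Finset (Finset V)) (a b : Fin (n+1)) : ℤ :=
  if b = Fin.last n then (Module.finrank (ZMod 2) ↥(cyclesOf d (F a)) : ℤ)
  else (Module.finrank (ZMod 2) ↥(cyclesOf d (F a) ⊓ boundariesOf d (F b)) : ℤ)

/-- The birth–death function of a 2-filtration indexed by `Fin (n+1) × Fin (n+1)`. -/
def ZBFin2 (d n : ℕ) (F : Fin (n+1) × Fin (n+1) → Finset (Finset V))
    (a b : Fin (n+1) × Fin (n+1)) : ℤ :=
  if b = (Fin.last n, Fin.last n) then (Module.finrank (ZMod 2) ↥(cyclesOf d (F a)) : ℤ)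
  else (Module.finrank (ZMod 2) ↥(cyclesOf d (F a) ⊓ boundariesOf d (F b)) : ℤ)

/-- `W w x y z` is the 1-dimensional Möbius inversion `wxyz = xz − xy − wz + wy`
of the birth–death function along a path through grades `w ≤ x ≤ y ≤ z`. -/
def W (d n : ℕ) (F : Fin (n+1) × Fin (n+1) → Finset (Finset V))
    (w x y z : Fin (n+1) × Fin (n+1)) : ℤ :=
  ZBFin2 d n F x z - ZBFin2 d n F x y - ZBFin2 d n F w z + ZBFin2 d n F w y

/-- The value `Dgm F [d,h]` of the Möbius inversion of the birth–death function of a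
2-filtration at the interval `[d,h]`, written as the sixteen-term alternating sum over
the corners `a,b,c,d` of the lower unit square and `e,f,g,h` of the upper unit square. -/
def Dgm16 (d n : ℕ) (F : Fin (n+1) × Fin (n+1) → Finset (Finset V))
    (a b c dd e f g h : Fin (n+1) × Fin (n+1)) : ℤ :=
  (ZBFin2 d n F dd h - ZBFin2 d n F dd f - ZBFin2 d n F dd g + ZBFin2 d n F dd e)
  - (ZBFin2 d n F b h - ZBFin2 d n F b f - ZBFin2 d n F b g + ZBFin2 d n F b e)
  - (ZBFin2 d n F c h - ZBFin2 d n F c f - ZBFin2 d n F c g + ZBFin2 d n F c e)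
  + (ZBFin2 d n F a h - ZBFin2 d n F a f - ZBFin2 d n F a g + ZBFin2 d n F a e)

/-- A lower corner of the appearance curve of a simplex `σ` in a 2-filtration `F`:
a minimal grade at which `σ` is present. -/
def LowerCorner {n : ℕ} (F : Fin (n+1) × Fin (n+1) → Finset (Finset V))
    (σ : Finset V) (a : Fin (n+1) × Fin (n+1)) : Prop :=
  σ ∈ F a ∧ ∀ b : Fin (n+1) × Fin (n+1), b < a → σ ∉ F b

/-- A 2-filtration is non-degenerate if no two (distinct) lower corners of appearance
curves share a component of a grade. -/
def NonDeg {n : ℕ} (F : Fin (n+1) × Fin (n+1) → Finset (Finset V)) : Prop :=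
  ∀ (σ τ : Finset V) (a b : Fin (n+1) × Fin (n+1)),
    LowerCorner F σ a → LowerCorner F τ b → (σ ≠ τ ∨ a ≠ b) →
    a.1 ≠ b.1 ∧ a.2 ≠ b.2

/-! Write `Z_x` for the cycles of `F x` and `B_y` for the boundaries of `F y`, with `B_⊤` the
whole chain space. Then
`adeh = dim (Z_d ⊓ B_h) - dim (Z_d ⊓ B_e) - dim (Z_a ⊓ B_h) + dim (Z_a ⊓ B_e)`
with `Z_a ≤ Z_d` and `B_e ≤ B_h`. The dimension formula for `⊔` and `⊓` makes such a mixed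
difference nonnegative and at most `dim Z_d - dim Z_a`, which is bounded by the number of simplices
of `F d \ F a`, and non-degeneracy bounds that number by two. -/

open Module

section LinearAlgebra

variable {K M : Type*} [DivisionRing K] [AddCommGroup M] [Module K M] [FiniteDimensional K M]

theorem finrank_inf_add_finrank_inf_le {Z Z' B B' : Submodule K M} (hZ : Z ≤ Z') (hB : B ≤ B') :
    finrank K ↥(Z ⊓ B') + finrank K ↥(Z' ⊓ B) ≤ finrank K ↥(Z' ⊓ B') + finrank K ↥(Z ⊓ B) := by
  have hinf : (Z ⊓ B') ⊓ (Z' ⊓ B) = Z ⊓ B := by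
    rw [inf_inf_inf_comm, inf_eq_left.mpr hZ, inf_eq_right.mpr hB]
  have hsup : (Z ⊓ B') ⊔ (Z' ⊓ B) ≤ Z' ⊓ B' := sup_le (inf_le_inf_right _ hZ) (inf_le_inf_left _ hB)
  rw [← Submodule.finrank_sup_add_finrank_inf_eq, hinf]
  exact Nat.add_le_add_right (Submodule.finrank_mono hsup) _

theorem finrank_inf_sub_finrank_inf_le {Z Z' : Submodule K M} (hZ : Z ≤ Z') (B : Submodule K M) :
    (finrank K ↥(Z' ⊓ B) : ℤ) - finrank K ↥(Z ⊓ B) ≤ finrank K Z' - finrank K Z := by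
  have := finrank_inf_add_finrank_inf_le hZ (le_top : B ≤ ⊤)
  rw [inf_top_eq, inf_top_eq] at this
  omega

end LinearAlgebra

section Filtrations

variable {U : Type*}

theorem finrank_chainsOf_le_add_card_sdiff [DecidableEq U] [Fintype U] (d : ℕ)
    (K L : Finset (Finset U)) :
    finrank (ZMod 2) ↥(chainsOf d L) ≤ finrank (ZMod 2) ↥(chainsOf d K) + (L \ K).card := by
  set N := Submodule.span (ZMod 2)
    (((L \ K).image fun s => Finsupp.single s (1 : ZMod 2) : Finset (Chn U)) : Set (Chn U))
  have hle : chainsOf d L ≤ chainsOf d K ⊔ N := by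
    rw [chainsOf, Submodule.span_le]
    rintro _ ⟨s, ⟨hsL, hscard⟩, rfl⟩
    by_cases hsK : s ∈ K
    · exact Submodule.mem_sup_left (Submodule.subset_span ⟨s, ⟨hsK, hscard⟩, rfl⟩)
    · exact Submodule.mem_sup_right (Submodule.subset_span
        (Finset.mem_image_of_mem _ (Finset.mem_sdiff.mpr ⟨hsL, hsK⟩)))
  have hN : finrank (ZMod 2) N ≤ (L \ K).card :=
    (finrank_span_finset_le_card _).trans Finset.card_image_le
  have hsup := Submodule.finrank_add_le_finrank_add_finrank (chainsOf d K) N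
  have hL := Submodule.finrank_mono hle
  omega

theorem chainsOf_mono (d : ℕ) {K L : Finset (Finset U)} (h : K ⊆ L) :
    chainsOf d K ≤ chainsOf d L :=
  Submodule.span_mono (Set.image_mono fun _ hs => ⟨h hs.1, hs.2⟩)

theorem cyclesOf_mono [DecidableEq U] (d : ℕ) {K L : Finset (Finset U)} (h : K ⊆ L) :
    cyclesOf d K ≤ cyclesOf d L :=
  inf_le_inf_right _ (chainsOf_mono d h)

theorem finrank_cyclesOf_le_add_card_sdiff [DecidableEq U] [Fintype U] (d : ℕ)
    {K L : Finset (Finset U)} (h : K ⊆ L) :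
    (finrank (ZMod 2) ↥(cyclesOf d L) : ℤ) ≤ finrank (ZMod 2) ↥(cyclesOf d K) + (L \ K).card := by
  have hcyc := finrank_inf_sub_finrank_inf_le (chainsOf_mono d h) (LinearMap.ker (bdry U))
  have hchn := finrank_chainsOf_le_add_card_sdiff d K L
  unfold cyclesOf
  omega

theorem exists_lowerCorner_le {n : ℕ} (F : Fin (n+1) × Fin (n+1) → Finset (Finset U))
    {σ : Finset U} {x : Fin (n+1) × Fin (n+1)} (hx : σ ∈ F x) :
    ∃ y ≤ x, LowerCorner F σ y := by
  obtain ⟨y, ⟨hyx, hy⟩, hmin⟩ := wellFounded_lt.has_min {y | y ≤ x ∧ σ ∈ F y} ⟨x, le_rfl, hx⟩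
  exact ⟨y, hyx, hy, fun z hzy hz => hmin z ⟨hzy.le.trans hyx, hz⟩ hzy⟩

theorem NonDeg.eq_of_fst_eq {n : ℕ} {F : Fin (n+1) × Fin (n+1) → Finset (Finset U)}
    (hF : NonDeg F) {σ τ : Finset U} {x y : Fin (n+1) × Fin (n+1)}
    (hσ : LowerCorner F σ x) (hτ : LowerCorner F τ y) (hxy : x.1 = y.1) : σ = τ := by
  by_contra hne
  exact (hF σ τ x y hσ hτ (Or.inl hne)).1 hxy

theorem NonDeg.eq_of_snd_eq {n : ℕ} {F : Fin (n+1) × Fin (n+1) → Finset (Finset U)}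
    (hF : NonDeg F) {σ τ : Finset U} {x y : Fin (n+1) × Fin (n+1)}
    (hσ : LowerCorner F σ x) (hτ : LowerCorner F τ y) (hxy : x.2 = y.2) : σ = τ := by
  by_contra hne
  exact (hF σ τ x y hσ hτ (Or.inl hne)).2 hxy

theorem le_of_diagonal_step {n : ℕ} {a a' : Fin (n+1) × Fin (n+1)}
    (h1 : (a.1 : ℕ) + 1 = a'.1) (h2 : (a.2 : ℕ) + 1 = a'.2) : a ≤ a' := by
  rw [Prod.le_def, Fin.le_def, Fin.le_def]
  omega

theorem fst_eq_or_snd_eq_of_diagonal_step {n : ℕ} {a a' y : Fin (n+1) × Fin (n+1)}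
    (h1 : (a.1 : ℕ) + 1 = a'.1) (h2 : (a.2 : ℕ) + 1 = a'.2) (hy : y ≤ a') (hya : ¬ y ≤ a) :
    y.1 = a'.1 ∨ y.2 = a'.2 := by
  rw [Prod.le_def, Fin.le_def, Fin.le_def] at hy hya
  rw [Fin.ext_iff, Fin.ext_iff]
  omega

/-- Each new simplex has a lower corner on the upper or right edge of the unit square, and by
non-degeneracy each of these two edges carries at most one lower corner. -/
theorem NonDeg.card_sdiff_le_two [DecidableEq U] {n : ℕ}
    {F : Fin (n+1) × Fin (n+1) → Finset (Finset U)}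
    (hmono : Monotone F) (hF : NonDeg F) {a a' : Fin (n+1) × Fin (n+1)}
    (h1 : (a.1 : ℕ) + 1 = a'.1) (h2 : (a.2 : ℕ) + 1 = a'.2) :
    (F a' \ F a).card ≤ 2 := by
  have hcorner : ∀ σ ∈ F a' \ F a, ∃ y, LowerCorner F σ y ∧ (y.1 = a'.1 ∨ y.2 = a'.2) := by
    intro σ hσ
    rw [Finset.mem_sdiff] at hσ
    obtain ⟨y, hya', hy⟩ := exists_lowerCorner_le F hσ.1
    exact ⟨y, hy, fst_eq_or_snd_eq_of_diagonal_step h1 h2 hya'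
      fun hya => hσ.2 (hmono hya hy.1)⟩
  choose! corner hcorner hedge using hcorner
  have hinj : Set.InjOn (fun σ => decide ((corner σ).1 = a'.1)) ↑(F a' \ F a) := by
    intro σ hσ τ hτ hστ
    by_cases hσ1 : (corner σ).1 = a'.1
    · have hτ1 : (corner τ).1 = a'.1 := by simpa [hσ1] using hστ.symm
      exact hF.eq_of_fst_eq (hcorner σ hσ) (hcorner τ hτ) (hσ1.trans hτ1.symm)
    · have hτ1 : (corner τ).1 ≠ a'.1 := by simpa [hσ1] using hστ.symm
      exact hF.eq_of_snd_eq (hcorner σ hσ) (hcorner τ hτ)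
        (((hedge σ hσ).resolve_left hσ1).trans ((hedge τ hτ).resolve_left hτ1).symm)
  simpa using Finset.card_le_card_of_injOn _ (fun _ _ => Finset.mem_univ _) hinj

/-- Setting `B_⊤ := ⊤` merges the two cases in the definition of `ZBFin2`. -/
def boundariesOrTop [DecidableEq U] (d n : ℕ) (F : Fin (n+1) × Fin (n+1) → Finset (Finset U))
    (y : Fin (n+1) × Fin (n+1)) : Submodule (ZMod 2) (Chn U) :=
  if y = (Fin.last n, Fin.last n) then ⊤ else boundariesOf d (F y)

theorem ZBFin2_eq_finrank [DecidableEq U] (d n : ℕ)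
    (F : Fin (n+1) × Fin (n+1) → Finset (Finset U)) (x y : Fin (n+1) × Fin (n+1)) :
    ZBFin2 d n F x y = finrank (ZMod 2) ↥(cyclesOf d (F x) ⊓ boundariesOrTop d n F y) := by
  unfold ZBFin2 boundariesOrTop
  by_cases hy : y = (Fin.last n, Fin.last n)
  · rw [if_pos hy, if_pos hy, inf_top_eq]
  · rw [if_neg hy, if_neg hy]

theorem boundariesOrTop_mono [DecidableEq U] (d n : ℕ)
    {F : Fin (n+1) × Fin (n+1) → Finset (Finset U)} (hmono : Monotone F) :
    Monotone (boundariesOrTop d n F) := by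
  intro y y' hyy'
  unfold boundariesOrTop
  split_ifs with hy hy'
  · exact le_rfl
  · rw [hy, ← Fin.top_eq_last] at hyy'
    exact absurd (top_le_iff.mp hyy') hy'
  · exact le_top
  · exact Submodule.map_mono (chainsOf_mono (d+1) (hmono hyy'))

end Filtrations

theorem adeh_mem_zero_one_two_general (d n : ℕ)
    (F : Fin (n+1) × Fin (n+1) → Finset (Finset V))
    (hmono : Monotone F)
    (a dd e h : Fin (n+1) × Fin (n+1))
    (ha1 : (a.1 : ℕ) + 1 = (dd.1 : ℕ)) (ha2 : (a.2 : ℕ) + 1 = (dd.2 : ℕ))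
    (he1 : (e.1 : ℕ) + 1 = (h.1 : ℕ)) (he2 : (e.2 : ℕ) + 1 = (h.2 : ℕ))
    (hnd : NonDeg F) :
    W d n F a dd e h = 0 ∨ W d n F a dd e h = 1 ∨ W d n F a dd e h = 2 := by
  have had := hmono (le_of_diagonal_step ha1 ha2)
  have hZ := cyclesOf_mono d had
  have hB := boundariesOrTop_mono d n hmono (le_of_diagonal_step he1 he2)
  have hmixed := finrank_inf_add_finrank_inf_le hZ hB
  have hZe := Submodule.finrank_mono (inf_le_inf_right (boundariesOrTop d n F e) hZ)
  have hZh := finrank_inf_sub_finrank_inf_le hZ (boundariesOrTop d n F h)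
  have hcycles := finrank_cyclesOf_le_add_card_sdiff d had
  have hnew := hnd.card_sdiff_le_two hmono ha1 ha2
  simp only [W, ZBFin2_eq_finrank]
  omega

/-- For a non-degenerate 2-filtration, the 1-dimensional Möbius inversion `adeh` along a
path through the diagonals of the two unit squares takes only the values 0, 1 or 2. -/
theorem adeh_mem_zero_one_two (d n : ℕ)
    (F : Fin (n+1) × Fin (n+1) → Finset (Finset V))
    (hmono : Monotone F) (hcx : ∀ x, IsComplex (F x)) (hbot : F (0, 0) = ∅)
    (a b c dd e f g h : Fin (n+1) × Fin (n+1))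
    (ha1 : (a.1 : ℕ) + 1 = (dd.1 : ℕ)) (ha2 : (a.2 : ℕ) + 1 = (dd.2 : ℕ))
    (hb : b = (a.1, dd.2)) (hc : c = (dd.1, a.2))
    (he1 : (e.1 : ℕ) + 1 = (h.1 : ℕ)) (he2 : (e.2 : ℕ) + 1 = (h.2 : ℕ))
    (hf : f = (e.1, h.2)) (hgg : g = (h.1, e.2))
    (hde : dd ≤ e)
    (hnd : NonDeg F) :
    W d n F a dd e h = 0 ∨ W d n F a dd e h = 1 ∨ W d n F a dd e h = 2 :=
  adeh_mem_zero_one_two_general d n F hmono a dd e h ha1 ha2 he1 he2 hnd
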